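/- arXiv:2109.02256 — 2 statements merged into one kernel-verified Lean document; each statement's English description precedes it below -/
import Mathlib

section
/- Let x₁, …, x_N be as in the periodic setting, solving the Euler–Lagrange system with zero potential gradient, assume r ↦ G'(r) r² is nondecreasing on (0, ∞), and let U : [0, ∞) → ℝ be twice continuously differentiable and convex. Then for every t ∈ [0, T], Σ_{i=1}^{N} U(Rᵢ(t)) (xᵢ(t) − x_{i−1}(t)) ≤ (t/T) Σ_{i=1}^{N} U(Rᵢ(T)) (xᵢ(T) − x_{i−1}(T)) + (1 − t/T) Σ_{i=1}^{N} U(Rᵢ(0)) (xᵢ(0) − x_{i−1}(0)). -/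
/-!
Let `E(t) = ∑ U(Rᵢ) dᵢ` with gaps `dᵢ = xᵢ − x_{i−1}`, and let `p(r) = r U'(r) − U(r)` be the
pressure of `U`. Since `Rᵢ = δ / dᵢ`, one gets `E' = −∑ p(Rᵢ) ḋᵢ` and
`E'' = ∑ Rᵢ² U''(Rᵢ) ḋᵢ² / dᵢ − ∑ p(Rᵢ) (ẍᵢ − ẍ_{i−1})`. The first sum is nonnegative because `U`
is convex. Summing the second by parts over one period turns it into
`∑ (p(R_{i+1}) − p(Rᵢ)) ẍᵢ`; by the Euler–Lagrange equation `ẍᵢ` has the sign of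
`B(R_{i+1}) − B(Rᵢ)` with `B(r) = G'(r) r²`, and `p` (as `p' = r U''`) and `B` are both
nondecreasing, so every term is nonnegative. Thus `E` is convex on `[0, T]`, and the claim is
the convexity inequality between `0` and `T`.
-/

open Set Finset

/-- Discrete density `Rᵢ(t) = δ/(xᵢ(t) − x_{i−1}(t))`, `δ = 1/N`, periodic indexing by `ℤ`. -/
noncomputable def Rd (N : ℕ) (x : ℤ → ℝ → ℝ) (i : ℤ) (t : ℝ) : ℝ :=
  ((1 : ℝ) / N) / (x i t - x (i - 1) t)

lemma Function.Periodic.sum_Icc_comp_add_one {M : Type*} [AddCommGroup M] {f : ℤ → M}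
    {n : ℤ} (hf : Function.Periodic f n) (hn : 0 ≤ n) :
    ∑ i ∈ Finset.Icc 1 n, f (i + 1) = ∑ i ∈ Finset.Icc 1 n, f i := by
  have hshift : ∑ i ∈ Finset.Icc 1 n, f (i + 1) = ∑ i ∈ Finset.Ioc 1 (n + 1), f i := by
    rw [show Finset.Ioc 1 (n + 1) = (Finset.Icc 1 n).map (addRightEmbedding 1) by
      ext; simp; omega, sum_map]
    rfl
  have hsplit : f 1 + ∑ i ∈ Finset.Ioc 1 (n + 1), f i = ∑ i ∈ Finset.Icc 1 n, f i + f 1 := by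
    rw [add_sum_Ioc_eq_sum_Icc (by omega), ← sum_Ico_add_eq_sum_Icc (by omega),
      Finset.Ico_add_one_right_eq_Icc, add_comm n 1, hf 1]
  rw [hshift]
  exact add_left_cancel (hsplit.trans (add_comm _ _))

lemma sub_mul_sub_nonneg_of_monotoneOn {α β : Type*} [LinearOrder α] [Ring β] [LinearOrder β]
    [IsStrictOrderedRing β] {f g : α → β} {s : Set α} (hf : MonotoneOn f s) (hg : MonotoneOn g s)
    {a b : α} (ha : a ∈ s) (hb : b ∈ s) : 0 ≤ (f b - f a) * (g b - g a) := by
  rcases le_total a b with hab | hab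
  · exact mul_nonneg (sub_nonneg.2 (hf ha hb hab)) (sub_nonneg.2 (hg ha hb hab))
  · exact mul_nonneg_of_nonpos_of_nonpos (sub_nonpos.2 (hf hb ha hab))
      (sub_nonpos.2 (hg hb ha hab))

lemma ConvexOn.le_of_mem_Icc {f : ℝ → ℝ} {T t : ℝ} (hf : ConvexOn ℝ (Icc 0 T) f) (hT : 0 < T)
    (ht : t ∈ Icc 0 T) : f t ≤ t / T * f T + (1 - t / T) * f 0 := by
  have hs : t / T ∈ Icc (0 : ℝ) 1 := ⟨div_nonneg ht.1 hT.le, (div_le_one hT).2 ht.2⟩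
  have h := hf.2 (right_mem_Icc.2 hT.le) (left_mem_Icc.2 hT.le) hs.1 (sub_nonneg.2 hs.2)
    (add_sub_cancel _ _)
  simpa [div_mul_cancel₀ t hT.ne'] using h

lemma ConvexOn.deriv_deriv_nonneg {S : Set ℝ} {U : ℝ → ℝ} (hU : ConvexOn ℝ S U)
    (hd : ∀ r ∈ S, DifferentiableAt ℝ U r) {r : ℝ} (hr : S ∈ nhds r) :
    0 ≤ deriv (deriv U) r := by
  rw [← derivWithin_of_mem_nhds hr]
  exact (hU.monotoneOn_deriv hd).derivWithin_nonneg

lemma sum_mul_sub_nonpos_of_periodic {n : ℕ} {ρ a m : ℤ → ℝ} {φ B : ℝ → ℝ} {s : Set ℝ}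
    {c : ℝ} (hρ : Function.Periodic ρ n) (ha : Function.Periodic a n) (hρs : ∀ i, ρ i ∈ s)
    (hφ : MonotoneOn φ s) (hB : MonotoneOn B s) (hm : ∀ i, 0 < m i) (hc : 0 ≤ c)
    (hsign : ∀ i, m i * a i = c * (B (ρ (i + 1)) - B (ρ i))) :
    ∑ i ∈ Finset.Icc (1 : ℤ) n, φ (ρ i) * (a i - a (i - 1)) ≤ 0 := by
  have hshift : ∑ i ∈ Finset.Icc (1 : ℤ) n, φ (ρ i) * a (i - 1) =
      ∑ i ∈ Finset.Icc (1 : ℤ) n, φ (ρ (i + 1)) * a i := by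
    refine (Function.Periodic.sum_Icc_comp_add_one (fun i ↦ ?_) (by positivity)).symm.trans ?_
    · simp only [hρ i, show i + n - 1 = i - 1 + n by ring, ha (i - 1)]
    · simp only [add_sub_cancel_right]
  have hterm : ∀ i, 0 ≤ (φ (ρ (i + 1)) - φ (ρ i)) * a i := fun i ↦ by
    refine nonneg_of_mul_nonneg_right ?_ (hm i)
    calc 0 ≤ c * ((φ (ρ (i + 1)) - φ (ρ i)) * (B (ρ (i + 1)) - B (ρ i))) :=
          mul_nonneg hc (sub_mul_sub_nonneg_of_monotoneOn hφ hB (hρs i) (hρs (i + 1)))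
      _ = m i * ((φ (ρ (i + 1)) - φ (ρ i)) * a i) := by
          linear_combination (φ (ρ (i + 1)) - φ (ρ i)) * (hsign i).symm
  calc _ = -∑ i ∈ Finset.Icc (1 : ℤ) n, (φ (ρ (i + 1)) - φ (ρ i)) * a i := by
        simp only [mul_sub, sub_mul, Finset.sum_sub_distrib, hshift]
        ring
    _ ≤ 0 := neg_nonpos.2 (Finset.sum_nonneg fun i _ ↦ hterm i)

noncomputable def pressure (U : ℝ → ℝ) (r : ℝ) : ℝ := r * deriv U r - U r

lemma hasDerivAt_pressure {U : ℝ → ℝ} {r : ℝ} (hU : ContDiffAt ℝ 2 U r) :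
    HasDerivAt (pressure U) (r * deriv (deriv U) r) r := by
  have hU' : HasDerivAt U (deriv U r) r := (hU.differentiableAt (by norm_num)).hasDerivAt
  have hU'' : HasDerivAt (deriv U) (deriv (deriv U) r) r :=
    ((hU.derivWithin (m := 1) (by norm_num)).differentiableAt (by norm_num)).hasDerivAt
  exact (((hasDerivAt_id' r).fun_mul hU'').fun_sub hU').congr_deriv (by ring)

lemma monotoneOn_pressure {U : ℝ → ℝ} (hU : ContDiffOn ℝ 2 U (Ioi 0))
    (hUc : ConvexOn ℝ (Ioi 0) U) : MonotoneOn (pressure U) (Ioi 0) := by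
  have hU2 : ∀ r ∈ Ioi (0 : ℝ), ContDiffAt ℝ 2 U r := fun r hr ↦
    hU.contDiffAt (Ioi_mem_nhds hr)
  refine monotoneOn_of_hasDerivWithinAt_nonneg (convex_Ioi 0)
    (fun r hr ↦ (hasDerivAt_pressure (hU2 r hr)).continuousAt.continuousWithinAt)
    (fun r hr ↦ (hasDerivAt_pressure (hU2 r (interior_subset hr))).hasDerivWithinAt) ?_
  rw [interior_Ioi]
  intro r hr
  exact mul_nonneg (le_of_lt hr) (hUc.deriv_deriv_nonneg
    (fun s hs ↦ (hU2 s hs).differentiableAt (by norm_num)) (Ioi_mem_nhds hr))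

lemma hasDerivAt_const_div {d : ℝ → ℝ} {c d' t : ℝ} (hd : HasDerivAt d d' t)
    (hd0 : d t ≠ 0) : HasDerivAt (fun s ↦ c / d s) (-(c / d t) * d' / d t) t :=
  ((hasDerivAt_const t c).fun_div hd hd0).congr_deriv (by field_simp; ring)

lemma hasDerivAt_comp_const_div_mul {U d : ℝ → ℝ} {c d' t : ℝ}
    (hU : DifferentiableAt ℝ U (c / d t)) (hd : HasDerivAt d d' t) (hd0 : d t ≠ 0) :
    HasDerivAt (fun s ↦ U (c / d s) * d s) (-(pressure U (c / d t) * d')) t := by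
  refine ((hU.hasDerivAt.comp t (hasDerivAt_const_div hd hd0)).fun_mul hd).congr_deriv ?_
  simp only [pressure, Function.comp_apply]
  field_simp
  ring

lemma hasDerivAt_pressure_comp_const_div_mul {U d v : ℝ → ℝ} {c d' v' t : ℝ}
    (hU : ContDiffAt ℝ 2 U (c / d t)) (hd : HasDerivAt d d' t) (hd0 : d t ≠ 0)
    (hv : HasDerivAt v v' t) :
    HasDerivAt (fun s ↦ pressure U (c / d s) * v s)
      (-((c / d t) ^ 2 * deriv (deriv U) (c / d t) * d' * v t / d t)
        + pressure U (c / d t) * v') t := by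
  have hp := (hasDerivAt_pressure hU).comp t (hasDerivAt_const_div hd hd0)
  refine (hp.fun_mul hv).congr_deriv ?_
  simp only [Function.comp_apply]
  field_simp

section Trajectories

variable {N : ℕ} {x : ℤ → ℝ → ℝ}

noncomputable def internalEnergy (N : ℕ) (x : ℤ → ℝ → ℝ) (U : ℝ → ℝ) (t : ℝ) : ℝ :=
  ∑ i ∈ Finset.Icc (1 : ℤ) N, U (Rd N x i t) * (x i t - x (i - 1) t)

noncomputable def pressureWork (N : ℕ) (x : ℤ → ℝ → ℝ) (U : ℝ → ℝ) (t : ℝ) : ℝ :=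
  ∑ i ∈ Finset.Icc (1 : ℤ) N, pressure U (Rd N x i t) * (deriv (x i) t - deriv (x (i - 1)) t)

lemma period_ne_zero (hper : ∀ i t, x (i + N) t = x i t + 1) : N ≠ 0 := by
  rintro rfl
  simpa using hper 0 0

lemma Rd_add_period (hper : ∀ i t, x (i + N) t = x i t + 1) (i : ℤ) (t : ℝ) :
    Rd N x (i + N) t = Rd N x i t := by
  rw [Rd, Rd, show i + N - 1 = i - 1 + N by ring, hper, hper, add_sub_add_right_eq_sub]

lemma deriv_add_period (hper : ∀ i t, x (i + N) t = x i t + 1) (i : ℤ) :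
    deriv (x (i + N)) = deriv (x i) := by
  rw [show x (i + N) = fun t ↦ x i t + 1 from funext (hper i), deriv_add_const']

lemma Rd_pos (hN : N ≠ 0) {i : ℤ} {t : ℝ} (hgap : x (i - 1) t < x i t) : 0 < Rd N x i t :=
  div_pos (by positivity) (sub_pos.2 hgap)

lemma hasDerivAt_internalEnergy {U : ℝ → ℝ} {t : ℝ} (hN : N ≠ 0)
    (hx : ∀ i, Differentiable ℝ (x i)) (hord : ∀ i, x i t < x (i + 1) t)
    (hU : ContDiffOn ℝ 2 U (Ioi 0)) :
    HasDerivAt (internalEnergy N x U) (-pressureWork N x U t) t := by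
  have hgap : ∀ i, x (i - 1) t < x i t := fun i ↦ by simpa using hord (i - 1)
  rw [pressureWork, ← Finset.sum_neg_distrib]
  exact HasDerivAt.fun_sum fun i _ ↦ hasDerivAt_comp_const_div_mul
    ((hU.contDiffAt (Ioi_mem_nhds (Rd_pos hN (hgap i)))).differentiableAt (by norm_num))
    ((hx i t).hasDerivAt.sub (hx (i - 1) t).hasDerivAt) (sub_pos.2 (hgap i)).ne'

lemma antitoneOn_pressureWork {L B U : ℝ → ℝ} {T : ℝ}
    (hper : ∀ i t, x (i + N) t = x i t + 1)
    (hx : ∀ i, ContDiff ℝ 2 (x i)) (hord : ∀ i, ∀ t ∈ Icc (0 : ℝ) T, x i t < x (i + 1) t)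
    (hL'' : ∀ u, 0 < deriv (deriv L) u) (hB : MonotoneOn B (Ioi 0))
    (hEL : ∀ i, ∀ t ∈ Icc (0 : ℝ) T, deriv (deriv L) (deriv (x i) t) * deriv (deriv (x i)) t =
      N * (B (Rd N x (i + 1) t) - B (Rd N x i t)))
    (hU : ContDiffOn ℝ 2 U (Ioi 0)) (hUc : ConvexOn ℝ (Ioi 0) U) :
    AntitoneOn (pressureWork N x U) (Icc 0 T) := by
  have hU2 : ∀ r ∈ Ioi (0 : ℝ), ContDiffAt ℝ 2 U r := fun r hr ↦
    hU.contDiffAt (Ioi_mem_nhds hr)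
  have hgap : ∀ t ∈ Icc 0 T, ∀ i, x (i - 1) t < x i t := fun t ht i ↦ by
    simpa using hord (i - 1) t ht
  have hR : ∀ t ∈ Icc 0 T, ∀ i, 0 < Rd N x i t := fun t ht i ↦
    Rd_pos (period_ne_zero hper) (hgap t ht i)
  have hderiv : ∀ t ∈ Icc 0 T, HasDerivAt (pressureWork N x U)
      (∑ i ∈ Finset.Icc (1 : ℤ) N,
        (-(Rd N x i t ^ 2 * deriv (deriv U) (Rd N x i t) * (deriv (x i) t - deriv (x (i - 1)) t)
            * (deriv (x i) t - deriv (x (i - 1)) t) / (x i t - x (i - 1) t))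
          + pressure U (Rd N x i t) * (deriv (deriv (x i)) t - deriv (deriv (x (i - 1))) t))) t :=
    fun t ht ↦ HasDerivAt.fun_sum fun i _ ↦ hasDerivAt_pressure_comp_const_div_mul
      (hU2 _ (hR t ht i))
      (((hx i).differentiable (by norm_num) t).hasDerivAt.sub
        ((hx (i - 1)).differentiable (by norm_num) t).hasDerivAt)
      (sub_pos.2 (hgap t ht i)).ne'
      (((hx i).differentiable_deriv_two t).hasDerivAt.sub
        ((hx (i - 1)).differentiable_deriv_two t).hasDerivAt)
  refine antitoneOn_of_hasDerivWithinAt_nonpos (convex_Icc 0 T)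
    (fun t ht ↦ (hderiv t ht).continuousAt.continuousWithinAt)
    (fun t ht ↦ (hderiv t (interior_subset ht)).hasDerivWithinAt) fun t ht ↦ ?_
  replace ht := interior_subset ht
  rw [Finset.sum_add_distrib]
  refine add_nonpos (Finset.sum_nonpos fun i _ ↦ neg_nonpos.2 ?_)
    (sum_mul_sub_nonpos_of_periodic (fun i ↦ Rd_add_period hper i t)
      (fun i ↦ by simp only [deriv_add_period hper]) (hR t ht) (monotoneOn_pressure hU hUc) hB
      (fun i ↦ hL'' _) (Nat.cast_nonneg N) (fun i ↦ hEL i t ht))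
  have hU'' : 0 ≤ deriv (deriv U) (Rd N x i t) := hUc.deriv_deriv_nonneg
    (fun r hr ↦ (hU2 r hr).differentiableAt (by norm_num)) (Ioi_mem_nhds (hR t ht i))
  rw [mul_assoc _ (deriv (x i) t - _)]
  exact div_nonneg (mul_nonneg (mul_nonneg (sq_nonneg _) hU'') (mul_self_nonneg _))
    (sub_pos.2 (hgap t ht i)).le

theorem convexOn_internalEnergy {L B U : ℝ → ℝ} {T : ℝ}
    (hper : ∀ i t, x (i + N) t = x i t + 1)
    (hx : ∀ i, ContDiff ℝ 2 (x i)) (hord : ∀ i, ∀ t ∈ Icc (0 : ℝ) T, x i t < x (i + 1) t)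
    (hL'' : ∀ u, 0 < deriv (deriv L) u) (hB : MonotoneOn B (Ioi 0))
    (hEL : ∀ i, ∀ t ∈ Icc (0 : ℝ) T, deriv (deriv L) (deriv (x i) t) * deriv (deriv (x i)) t =
      N * (B (Rd N x (i + 1) t) - B (Rd N x i t)))
    (hU : ContDiffOn ℝ 2 U (Ioi 0)) (hUc : ConvexOn ℝ (Ioi 0) U) :
    ConvexOn ℝ (Icc 0 T) (internalEnergy N x U) := by
  have hE : ∀ t ∈ Icc 0 T, HasDerivAt (internalEnergy N x U) (-pressureWork N x U t) t :=
    fun t ht ↦ hasDerivAt_internalEnergy (period_ne_zero hper)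
      (fun i ↦ (hx i).differentiable (by norm_num)) (fun i ↦ hord i t ht) hU
  have hW := antitoneOn_pressureWork hper hx hord hL'' hB hEL hU hUc
  refine MonotoneOn.convexOn_of_deriv (convex_Icc 0 T)
    (fun t ht ↦ (hE t ht).continuousAt.continuousWithinAt)
    (fun t ht ↦ (hE t (interior_subset ht)).differentiableAt.differentiableWithinAt) ?_
  intro a ha b hb hab
  rw [(hE a (interior_subset ha)).deriv, (hE b (interior_subset hb)).deriv]
  exact neg_le_neg (hW (interior_subset ha) (interior_subset hb) hab)

end Trajectories

theorem stmt_2_general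
    (N : ℕ) (T : ℝ) (hT : 0 < T)
    (x : ℤ → ℝ → ℝ)
    (hper : ∀ i t, x (i + N) t = x i t + 1)
    (hx : ∀ i, ContDiff ℝ 2 (x i))
    (hord : ∀ i, ∀ t ∈ Icc (0:ℝ) T, x i t < x (i + 1) t)
    (L : ℝ → ℝ)
    (hL'' : ∀ u, 0 < deriv (deriv L) u)
    (G : ℝ → ℝ)
    (hB : MonotoneOn (fun r => deriv G r * r ^ 2) (Ioi 0))
    (hEL : ∀ i, ∀ t ∈ Icc (0:ℝ) T,
      deriv (deriv L) (deriv (x i) t) * deriv (deriv (x i)) t =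
        N * (deriv G (Rd N x (i + 1) t) * (Rd N x (i + 1) t) ^ 2
          - deriv G (Rd N x i t) * (Rd N x i t) ^ 2))
    (U : ℝ → ℝ) (hU : ContDiffOn ℝ 2 U (Ici 0))
    (hUconv : ConvexOn ℝ (Ici 0) U) :
    ∀ t ∈ Icc (0:ℝ) T,
      ∑ i ∈ Finset.Icc (1:ℤ) (N:ℤ), U (Rd N x i t) * (x i t - x (i - 1) t) ≤
        (t / T) * ∑ i ∈ Finset.Icc (1:ℤ) (N:ℤ), U (Rd N x i T) * (x i T - x (i - 1) T)
        + (1 - t / T) *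
            ∑ i ∈ Finset.Icc (1:ℤ) (N:ℤ), U (Rd N x i 0) * (x i 0 - x (i - 1) 0) :=
  fun _ ht ↦ (convexOn_internalEnergy hper hx hord hL'' hB hEL (hU.mono Ioi_subset_Ici_self)
    (hUconv.subset Ioi_subset_Ici_self (convex_Ioi 0))).le_of_mem_Icc hT ht

/-- Along solutions of the periodic Euler–Lagrange system with zero potential gradient,
for any convex `U ∈ C²([0,∞))` the discrete internal energy at time `t` is bounded by the
corresponding convex combination of its initial and terminal values. -/
theorem stmt_2
    (N : ℕ) (hN : 2 ≤ N) (T : ℝ) (hT : 0 < T)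
    (x : ℤ → ℝ → ℝ)
    (hper : ∀ i t, x (i + N) t = x i t + 1)
    (hx : ∀ i, ContDiff ℝ 2 (x i))
    (hord : ∀ i, ∀ t ∈ Icc (0:ℝ) T, x i t < x (i + 1) t)
    (L : ℝ → ℝ) (hL : ContDiff ℝ 2 L)
    (hL'' : ∀ u, 0 < deriv (deriv L) u)
    (G : ℝ → ℝ) (hG : ContDiffOn ℝ 1 G (Ioi 0))
    (hB : MonotoneOn (fun r => deriv G r * r ^ 2) (Ioi 0))
    (hEL : ∀ i, ∀ t ∈ Icc (0:ℝ) T,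
      deriv (deriv L) (deriv (x i) t) * deriv (deriv (x i)) t =
        N * (deriv G (Rd N x (i + 1) t) * (Rd N x (i + 1) t) ^ 2
          - deriv G (Rd N x i t) * (Rd N x i t) ^ 2))
    (U : ℝ → ℝ) (hU : ContDiffOn ℝ 2 U (Ici 0))
    (hUconv : ConvexOn ℝ (Ici 0) U) :
    ∀ t ∈ Icc (0:ℝ) T,
      ∑ i ∈ Finset.Icc (1:ℤ) (N:ℤ), U (Rd N x i t) * (x i t - x (i - 1) t) ≤
        (t / T) * ∑ i ∈ Finset.Icc (1:ℤ) (N:ℤ), U (Rd N x i T) * (x i T - x (i - 1) T)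
        + (1 - t / T) *
            ∑ i ∈ Finset.Icc (1:ℤ) (N:ℤ), U (Rd N x i 0) * (x i 0 - x (i - 1) 0) :=
  stmt_2_general N T hT x hper hx hord L hL'' G hB hEL U hU hUconv
end

section
/- Let G ∈ C²((0, ∞); ℝ) satisfy r G''(r) + 2 G'(r) ≥ 0 for all r > 0, let δ > 0, and let a < b be real numbers. Then the function x ↦ G(δ/(x − a)) + G(δ/(b − x)) is convex on the open interval (a, b). -/
/-!
Writing `ψ r = r ^ 2 * G' r`, the chain rule gives `d/dx G (δ / x) = -ψ (δ / x) / δ`. The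
hypothesis says exactly that `ψ' r = r * (r * G'' r + 2 * G' r) ≥ 0`, so `ψ` is monotone on
`(0, ∞)`; as `x ↦ δ / x` is antitone there, the derivative of `x ↦ G (δ / x)` is monotone and
this function is convex on `(0, ∞)`. The two summands are its compositions with the affine maps
`x ↦ x - a` and `x ↦ b - x`.
-/

open Set

theorem ConvexOn.comp_sub_const {s : Set ℝ} {f : ℝ → ℝ} (hf : ConvexOn ℝ s f) (c : ℝ) :
    ConvexOn ℝ ((fun x => x - c) ⁻¹' s) (fun x => f (x - c)) :=
  hf.comp_affineMap (AffineMap.id ℝ ℝ - AffineMap.const ℝ ℝ c)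

theorem ConvexOn.comp_const_sub {s : Set ℝ} {f : ℝ → ℝ} (hf : ConvexOn ℝ s f) (c : ℝ) :
    ConvexOn ℝ ((fun x => c - x) ⁻¹' s) (fun x => f (c - x)) :=
  hf.comp_affineMap (AffineMap.const ℝ ℝ c - AffineMap.id ℝ ℝ)

section

variable {G : ℝ → ℝ}

theorem hasDerivAt_sq_mul_deriv {r : ℝ} (hG : DifferentiableAt ℝ (deriv G) r) :
    HasDerivAt (fun r => r ^ 2 * deriv G r) (r * (r * deriv (deriv G) r + 2 * deriv G r)) r :=
  ((hasDerivAt_pow 2 r).mul hG.hasDerivAt).congr_deriv (by norm_num; ring)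

theorem monotoneOn_sq_mul_deriv (hG : ContDiffOn ℝ 2 G (Ioi 0))
    (hineq : ∀ r : ℝ, 0 < r → 0 ≤ r * deriv (deriv G) r + 2 * deriv G r) :
    MonotoneOn (fun r => r ^ 2 * deriv G r) (Ioi 0) := by
  have hderiv : ∀ r ∈ Ioi (0 : ℝ), HasDerivAt (fun r => r ^ 2 * deriv G r)
      (r * (r * deriv (deriv G) r + 2 * deriv G r)) r := fun r hr =>
    hasDerivAt_sq_mul_deriv <|
      ((hG.deriv_of_isOpen isOpen_Ioi (m := 1) (by norm_num)).differentiableOn one_ne_zero)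
        |>.differentiableAt (isOpen_Ioi.mem_nhds hr)
  refine monotoneOn_of_hasDerivWithinAt_nonneg (convex_Ioi 0)
    (f' := fun r => r * (r * deriv (deriv G) r + 2 * deriv G r))
    (fun r hr => (hderiv r hr).continuousAt.continuousWithinAt) ?_ ?_ <;> rw [interior_Ioi]
  · exact fun r hr => (hderiv r hr).hasDerivWithinAt
  · exact fun r hr => mul_nonneg hr.le (hineq r hr)

theorem hasDerivAt_comp_const_div {δ x : ℝ} (hδ : δ ≠ 0) (hx : x ≠ 0)
    (hG : DifferentiableAt ℝ G (δ / x)) :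
    HasDerivAt (fun x => G (δ / x)) (-((δ / x) ^ 2 * deriv G (δ / x)) / δ) x := by
  have hdiv : HasDerivAt (fun x => δ / x) (-δ / x ^ 2) x := by
    simpa [div_eq_mul_inv, neg_div] using (hasDerivAt_inv hx).const_mul δ
  exact (hG.hasDerivAt.comp x hdiv).congr_deriv (by field_simp)

theorem convexOn_comp_const_div (hG : ContDiffOn ℝ 2 G (Ioi 0))
    (hineq : ∀ r : ℝ, 0 < r → 0 ≤ r * deriv (deriv G) r + 2 * deriv G r) {δ : ℝ} (hδ : 0 < δ) :
    ConvexOn ℝ (Ioi 0) (fun x => G (δ / x)) := by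
  have hderiv : ∀ x ∈ Ioi (0 : ℝ), HasDerivAt (fun x => G (δ / x))
      (-((δ / x) ^ 2 * deriv G (δ / x)) / δ) x := fun x hx =>
    hasDerivAt_comp_const_div hδ.ne' (ne_of_gt hx) <|
      (hG.differentiableOn two_ne_zero).differentiableAt (isOpen_Ioi.mem_nhds (div_pos hδ hx))
  refine MonotoneOn.convexOn_of_deriv (convex_Ioi 0)
    (fun x hx => (hderiv x hx).continuousAt.continuousWithinAt) ?_ ?_ <;> rw [interior_Ioi]
  · exact fun x hx => (hderiv x hx).differentiableAt.differentiableWithinAt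
  intro x hx y hy hxy
  rw [(hderiv x hx).deriv, (hderiv y hy).deriv, div_le_div_iff_of_pos_right hδ, neg_le_neg_iff]
  exact monotoneOn_sq_mul_deriv hG hineq (div_pos hδ hy) (div_pos hδ hx)
    (div_le_div_of_nonneg_left hδ.le hx hxy)

end

theorem stmt_9_general
    (G : ℝ → ℝ) (hG : ContDiffOn ℝ 2 G (Set.Ioi 0))
    (hineq : ∀ r : ℝ, 0 < r → 0 ≤ r * deriv (deriv G) r + 2 * deriv G r)
    (δ : ℝ) (hδ : 0 < δ) (a b : ℝ) :
    ConvexOn ℝ (Set.Ioo a b) (fun x => G (δ / (x - a)) + G (δ / (b - x))) := by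
  have hconv := convexOn_comp_const_div hG hineq hδ
  have hleft : ConvexOn ℝ (Ioi a) (fun x => G (δ / (x - a))) := by
    simpa using hconv.comp_sub_const a
  have hright : ConvexOn ℝ (Iio b) (fun x => G (δ / (b - x))) := by
    simpa using hconv.comp_const_sub b
  exact (hleft.subset Ioo_subset_Ioi_self (convex_Ioo a b)).add
    (hright.subset Ioo_subset_Iio_self (convex_Ioo a b))

/-- If `G ∈ C²((0,∞))` satisfies `r G''(r) + 2 G'(r) ≥ 0` on `(0,∞)`, then for `δ > 0`
and `a < b`, the function `x ↦ G(δ/(x−a)) + G(δ/(b−x))` is convex on `(a,b)`. -/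
theorem stmt_9
    (G : ℝ → ℝ) (hG : ContDiffOn ℝ 2 G (Set.Ioi 0))
    (hineq : ∀ r : ℝ, 0 < r → 0 ≤ r * deriv (deriv G) r + 2 * deriv G r)
    (δ : ℝ) (hδ : 0 < δ) (a b : ℝ) (hab : a < b) :
    ConvexOn ℝ (Set.Ioo a b) (fun x => G (δ / (x - a)) + G (δ / (b - x))) :=
  stmt_9_general G hG hineq δ hδ a b
end
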